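/- arXiv:2104.10074 — 5 statements merged into one kernel-verified Lean document; each statement's English description precedes it below -/
import Mathlib

section
/- For all natural numbers m, n: L_{2m}^2 + 5*F_{2n+1}^2 + 5*F_{2m+2n+1}^2 = 5*L_{2m}*F_{2n+1}*F_{2m+2n+1} + 4. -/
def lucas : ℕ → ℕ
  | 0 => 2
  | 1 => 1
  | n + 2 => lucas (n + 1) + lucas n

lemma lucas_eq (k : ℕ) : (lucas k : ℤ) = 2 * Nat.fib (k + 1) - Nat.fib k := by
  induction k using Nat.twoStepInduction with
  | zero => simp [lucas]
  | one => simp [lucas]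
  | more k ih1 ih2 =>
    simp only [lucas, Nat.cast_add]
    rw [show k + 2 + 1 = (k + 1) + 2 from rfl, Nat.fib_add_two, Nat.fib_add_two]
    rw [show k + 1 + 1 = k + 2 from rfl, Nat.fib_add_two] at ih2
    push_cast at *
    linarith

lemma fib_sq (k : ℕ) :
    (Nat.fib (2 * k + 1) : ℤ) ^ 2 - Nat.fib (2 * k) * Nat.fib (2 * k + 1)
      - (Nat.fib (2 * k) : ℤ) ^ 2 = 1 := by
  induction k with
  | zero => simp
  | succ k ih =>
    have h1 : 2 * (k + 1) = (2 * k + 1) + 1 := by ring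
    have h2 : 2 * (k + 1) + 1 = (2 * k) + 2 + 1 := by ring
    rw [h1, show 2 * k + 1 + 1 + 1 = (2 * k + 1) + 2 from rfl, Nat.fib_add_two,
      show 2 * k + 1 + 1 = (2 * k) + 2 from rfl, Nat.fib_add_two]
    push_cast
    nlinarith [ih]

theorem stmt2 (m n : ℕ) :
    (lucas (2 * m) : ℤ) ^ 2 + 5 * (Nat.fib (2 * n + 1) : ℤ) ^ 2 +
      5 * (Nat.fib (2 * m + 2 * n + 1) : ℤ) ^ 2 =
    5 * (lucas (2 * m) : ℤ) * (Nat.fib (2 * n + 1) : ℤ) * (Nat.fib (2 * m + 2 * n + 1) : ℤ) + 4 := by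
  have hadd : (Nat.fib (2 * m + 2 * n + 1) : ℤ)
      = Nat.fib (2 * m) * Nat.fib (2 * n) + Nat.fib (2 * m + 1) * Nat.fib (2 * n + 1) := by
    rw [Nat.fib_add]; push_cast; ring
  have h1 := fib_sq m
  have h2 := fib_sq n
  rw [lucas_eq, hadd]
  set a := (Nat.fib (2 * m) : ℤ)
  set b := (Nat.fib (2 * m + 1) : ℤ)
  set c := (Nat.fib (2 * n) : ℤ)
  set d := (Nat.fib (2 * n + 1) : ℤ)
  linear_combination (4 - 5 * d ^ 2) * h1 - 5 * a ^ 2 * h2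
end

section
/- For all integers n, m, r: F_{n+r}*L_{m+r} + (-1)^{r+1}*F_n*L_m = F_r*L_{n+m+r}. -/
def fibZ (n : ℤ) : ℤ :=
  if 0 ≤ n then (Nat.fib n.toNat : ℤ) else (-1) ^ (n.natAbs + 1) * (Nat.fib n.natAbs : ℤ)

def lucasZ (n : ℤ) : ℤ :=
  if 0 ≤ n then (lucas n.toNat : ℤ) else (-1) ^ n.natAbs * (lucas n.natAbs : ℤ)

/-!
By Binet's formulas `F_n = (φ ^ n - ψ ^ n) / √5` and `L_n = φ ^ n + ψ ^ n`, which persist to negative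
`n` because `φ⁻¹ = -ψ`, and since `(-1) ^ r = (φ ψ) ^ r`, the identity is an instance of a Laurent
polynomial identity in two nonzero commuting quantities `a`, `b`.
-/

open Real
open scoped goldenRatio

theorem zpow_sub_zpow_mul_zpow_add_zpow {K : Type*} [Field K] {a b : K} (ha : a ≠ 0)
    (hb : b ≠ 0) (n m r : ℤ) :
    (a ^ (n + r) - b ^ (n + r)) * (a ^ (m + r) + b ^ (m + r))
      - (a * b) ^ r * ((a ^ n - b ^ n) * (a ^ m + b ^ m))
      = (a ^ r - b ^ r) * (a ^ (n + m + r) + b ^ (n + m + r)) := by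
  simp only [zpow_add₀ ha, zpow_add₀ hb, mul_zpow]
  ring

lemma Int.cast_units_zpow {K : Type*} [DivisionRing K] (u : ℤˣ) (k : ℤ) :
    (((u ^ k : ℤˣ) : ℤ) : K) = ((u : ℤ) : K) ^ k := by
  have := Units.val_zpow_eq_zpow_val (Units.map (Int.castRingHom K).toMonoidHom u) k
  rwa [← map_zpow, Units.coe_map, Units.coe_map] at this

lemma lucas_eq_goldenRatio_pow_add (n : ℕ) : (lucas n : ℝ) = φ ^ n + ψ ^ n := by
  induction n using Nat.twoStepInduction with
  | zero => norm_num [lucas]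
  | one => simp [lucas]
  | more n ih₀ ih₁ =>
    rw [lucas, Nat.cast_add, ih₀, ih₁]
    linear_combination -φ ^ n * goldenRatio_sq - ψ ^ n * goldenConj_sq

lemma fibZ_eq_binet (n : ℤ) : (fibZ n : ℝ) = (φ ^ n - ψ ^ n) / √5 := by
  obtain ⟨k, rfl | rfl⟩ := n.eq_nat_or_neg
  · simp [fibZ, coe_fib_eq]
  rcases k.eq_zero_or_pos with rfl | hk
  · simp [fibZ]
  have hneg : ¬ (0 : ℤ) ≤ -k := by omega
  simp only [fibZ, hneg, if_false, Int.natAbs_neg, Int.natAbs_natCast, zpow_neg, zpow_natCast,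
    ← inv_pow, inv_goldenRatio, inv_goldenConj, neg_pow ψ, neg_pow φ]
  push_cast
  rw [coe_fib_eq]
  ring

lemma lucasZ_eq_binet (n : ℤ) : (lucasZ n : ℝ) = φ ^ n + ψ ^ n := by
  obtain ⟨k, rfl | rfl⟩ := n.eq_nat_or_neg
  · simp [lucasZ, lucas_eq_goldenRatio_pow_add]
  rcases k.eq_zero_or_pos with rfl | hk
  · simp [lucasZ, lucas_eq_goldenRatio_pow_add]
  have hneg : ¬ (0 : ℤ) ≤ -k := by omega
  simp only [lucasZ, hneg, if_false, Int.natAbs_neg, Int.natAbs_natCast, zpow_neg, zpow_natCast,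
    ← inv_pow, inv_goldenRatio, inv_goldenConj, neg_pow ψ, neg_pow φ]
  push_cast
  rw [lucas_eq_goldenRatio_pow_add]
  ring

theorem stmt4 (n m r : ℤ) :
    fibZ (n + r) * lucasZ (m + r) + (((-1 : ℤˣ) ^ (r + 1) : ℤˣ) : ℤ) * fibZ n * lucasZ m =
      fibZ r * lucasZ (n + m + r) := by
  have hsign : ((((-1 : ℤˣ) ^ (r + 1) : ℤˣ) : ℤ) : ℝ) = -(φ * ψ) ^ r := by
    rw [Int.cast_units_zpow, goldenRatio_mul_goldenConj, zpow_add_one₀ (by norm_num)]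
    push_cast
    ring
  apply Int.cast_injective (α := ℝ)
  simp only [Int.cast_add, Int.cast_mul, hsign, fibZ_eq_binet, lucasZ_eq_binet]
  linear_combination
    zpow_sub_zpow_mul_zpow_add_zpow goldenRatio_ne_zero goldenConj_ne_zero n m r / √5
end

section
/- Let A and B be 2×2 complex matrices with determinant 1 such that A*B = B*A. Then trace(A)^2 + trace(B)^2 + trace(A*B)^2 = trace(A)*trace(B)*trace(A*B) + 4. -/
lemma ch2 (M : Matrix (Fin 2) (Fin 2) ℂ) :
    M * M = M.trace • M - M.det • (1 : Matrix (Fin 2) (Fin 2) ℂ) := by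
  ext i j
  fin_cases i <;> fin_cases j <;>
    simp [Matrix.mul_apply, Matrix.trace, Matrix.diag, Fin.sum_univ_two,
      Matrix.det_fin_two, Matrix.one_apply] <;> ring

theorem stmt10 (A B : Matrix (Fin 2) (Fin 2) ℂ) (hA : A.det = 1) (hB : B.det = 1)
    (hcomm : A * B = B * A) :
    (A.trace) ^ 2 + (B.trace) ^ 2 + ((A * B).trace) ^ 2 =
      A.trace * B.trace * (A * B).trace + 4 := by
  have hdet : (A * B).det = 1 := by rw [Matrix.det_mul, hA, hB, mul_one]
  have h1 : (A * B) * (A * B) = (A * A) * (B * B) := by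
    calc (A * B) * (A * B) = A * (B * A) * B := by noncomm_ring
    _ = A * (A * B) * B := by rw [hcomm]
    _ = (A * A) * (B * B) := by noncomm_ring
  have h2 := ch2 (A * B)
  rw [h1, ch2 A, ch2 B, hA, hB, hdet] at h2
  have h3 := congrArg Matrix.trace h2
  simp only [sub_mul, mul_sub, smul_mul_assoc, mul_smul_comm, one_mul, mul_one, one_smul,
    Matrix.trace_sub, Matrix.trace_add, Matrix.trace_smul, Matrix.trace_one, smul_smul,
    smul_eq_mul, Fintype.card_fin, Nat.cast_ofNat] at h3
  linear_combination -h3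
end

section
/- For all integers n and m: (-1)^n * L_n^2 + (-1)^m * L_m^2 + (-1)^{m+n} * L_{m+n}^2 = (-1)^{m+n} * L_n * L_m * L_{m+n} + 4. -/
/-!
Binet's formula `L_n = φ^n + ψ^n` holds for all integers `n`, and `(-1)^n = (φψ)^n`. With
`a = φ^n`, `b = ψ^n`, `c = φ^m`, `d = ψ^m` the identity becomes a polynomial identity in
`a, b, c, d`, which holds modulo the relations `(ab)^2 = (cd)^2 = 1`.
-/

open Real

theorem lucas_eq_pow_add {R : Type*} [CommRing R] {α β : R} (hsum : α + β = 1)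
    (hprod : α * β = -1) (n : ℕ) :
    (lucas n : R) = α ^ n + β ^ n := by
  induction n using Nat.twoStepInduction with
  | zero => norm_num [lucas]
  | one => simp [lucas, hsum]
  | more n ih₀ ih₁ =>
    rw [lucas, Nat.cast_add, ih₀, ih₁]
    linear_combination (-(α ^ (n + 1) + β ^ (n + 1))) * hsum + (α ^ n + β ^ n) * hprod

theorem lucasZ_neg_natCast (k : ℕ) : lucasZ (-k) = (-1) ^ k * lucas k := by
  rcases k.eq_zero_or_pos with rfl | hk
  · simp [lucasZ]
  · simp [lucasZ, hk.ne']

section Binet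

variable {K : Type*} [Field K] {α β : K}

theorem lucasZ_eq_zpow_add (hsum : α + β = 1) (hprod : α * β = -1) (n : ℤ) :
    (lucasZ n : K) = α ^ n + β ^ n := by
  obtain ⟨k, rfl | rfl⟩ := n.eq_nat_or_neg
  · simpa [lucasZ] using lucas_eq_pow_add hsum hprod k
  · have hα : α⁻¹ = -β := by rw [inv_eq_of_mul_eq_one_right]; linear_combination -hprod
    have hβ : β⁻¹ = -α := by rw [inv_eq_of_mul_eq_one_right]; linear_combination -hprod
    rw [lucasZ_neg_natCast, zpow_neg, zpow_neg, zpow_natCast, zpow_natCast, ← inv_pow,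
      ← inv_pow, hα, hβ, neg_pow, neg_pow α]
    push_cast
    rw [lucas_eq_pow_add hsum hprod]
    ring

theorem cast_units_neg_one_zpow (hprod : α * β = -1) (n : ℤ) :
    ((((-1 : ℤˣ) ^ n : ℤˣ) : ℤ) : K) = α ^ n * β ^ n := by
  rw [← mul_zpow, hprod]
  rcases Int.even_or_odd n with h | h <;> simp [h.neg_one_zpow]

theorem zpow_mul_zpow_sq_eq_one (hprod : α * β = -1) (n : ℤ) : (α ^ n * β ^ n) ^ 2 = 1 := by
  rw [← mul_zpow, hprod, ← zpow_natCast, ← zpow_mul, mul_comm, zpow_mul]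
  simp

end Binet

theorem add_sq_identity_of_mul_sq_eq_one {R : Type*} [CommRing R] {a b c d : R}
    (hab : (a * b) ^ 2 = 1) (hcd : (c * d) ^ 2 = 1) :
    a * b * (a + b) ^ 2 + c * d * (c + d) ^ 2 + c * a * (d * b) * (c * a + d * b) ^ 2 =
      c * a * (d * b) * (a + b) * (c + d) * (c * a + d * b) + 4 := by
  linear_combination (2 - c * d * (c ^ 2 + d ^ 2)) * hab + (2 - a * b * (a ^ 2 + b ^ 2)) * hcd

theorem stmt11 (n m : ℤ) :
    (((-1 : ℤˣ) ^ n : ℤˣ) : ℤ) * lucasZ n ^ 2 + (((-1 : ℤˣ) ^ m : ℤˣ) : ℤ) * lucasZ m ^ 2 +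
      (((-1 : ℤˣ) ^ (m + n) : ℤˣ) : ℤ) * lucasZ (m + n) ^ 2 =
    (((-1 : ℤˣ) ^ (m + n) : ℤˣ) : ℤ) * lucasZ n * lucasZ m * lucasZ (m + n) + 4 := by
  have hsum := goldenRatio_add_goldenConj
  have hprod := goldenRatio_mul_goldenConj
  apply Int.cast_injective (α := ℝ)
  push_cast
  simp only [cast_units_neg_one_zpow hprod, lucasZ_eq_zpow_add hsum hprod,
    zpow_add₀ goldenRatio_ne_zero, zpow_add₀ goldenConj_ne_zero]
  exact add_sq_identity_of_mul_sq_eq_one (zpow_mul_zpow_sq_eq_one hprod n)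
    (zpow_mul_zpow_sq_eq_one hprod m)
end

section
/- Let W be the 3×3 integer matrix [[0,0,1],[0,1,2],[1,1,1]]. Then for all n ≥ 1, W^n = [[F_{n-1}^2, F_{n-1}F_n, F_n^2],[2F_{n-1}F_n, F_{n-1}^2+F_nF_{n+1}, 2F_nF_{n+1}],[F_n^2, F_nF_{n+1}, F_{n+1}^2]]. -/
theorem stmt15 (n : ℕ) (hn : 1 ≤ n) :
    (!![0, 0, 1; 0, 1, 2; 1, 1, 1] : Matrix (Fin 3) (Fin 3) ℤ) ^ n =
      !![(Nat.fib (n - 1) : ℤ) ^ 2, (Nat.fib (n - 1) : ℤ) * Nat.fib n, (Nat.fib n : ℤ) ^ 2;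
        2 * (Nat.fib (n - 1) : ℤ) * Nat.fib n,
          (Nat.fib (n - 1) : ℤ) ^ 2 + (Nat.fib n : ℤ) * Nat.fib (n + 1),
          2 * (Nat.fib n : ℤ) * Nat.fib (n + 1);
        (Nat.fib n : ℤ) ^ 2, (Nat.fib n : ℤ) * Nat.fib (n + 1), (Nat.fib (n + 1) : ℤ) ^ 2] := by
  induction n, hn using Nat.le_induction with
  | base => norm_num [pow_one]
  | succ n hn ih =>
    rw [pow_succ, ih]
    have h1 : n + 1 - 1 = n := rfl
    have h2 : (Nat.fib (n + 1) : ℤ) = Nat.fib (n - 1) + Nat.fib n := by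
      obtain ⟨m, rfl⟩ := Nat.exists_eq_add_of_le hn
      rw [add_comm 1 m]
      push_cast [Nat.fib_add_two]
      ring
    have h3 : (Nat.fib (n + 2) : ℤ) = Nat.fib n + Nat.fib (n + 1) := by
      push_cast [Nat.fib_add_two]; ring
    ext i j
    fin_cases i <;> fin_cases j <;>
      simp [Matrix.mul_apply, Fin.sum_univ_succ, h1, h2, h3] <;> ring
end
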